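/- arXiv:2002.06724 — 2 statements merged into one kernel-verified Lean document; each statement's English description precedes it below -/
import Mathlib

section
/- Let (N, J, θ) be a free boundary geodesic network in the closed unit disk B̄₁ and let μ > 0 be a real number such that its mass (1/2)·Σᵢ Σⱼ (θ i j : ℝ)·‖J i − J j‖ is at most μ. Then for every junction l with ‖J l‖ = 1 at which at least one segment arrives (i.e. Σᵢ θ i l > 0) one has Σᵢ θ i l < μ/√2; equivalently, the one-dimensional density (1/2)·Σᵢ θ i l of the network at the boundary junction J l is strictly smaller than μ/(2√2). -/
open scoped RealInnerProductSpace BigOperators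

/-!
Write the balancing condition at a junction as `force j = -w j • x j`, where `w j ≥ 0` is the
reaction of the wall (zero at interior junctions). Testing the discrete first variation formula
`∑ j, ⟪X j, force j⟫ = -δM(X)` against the position field gives `∑ w = M`, the mass, and against
constant fields gives `∑ w j • x j = 0`, hence `∑ w j ‖x j - x l‖² = 2M`. Testing it against
the unit radial field about the boundary junction `x l`, which is monotone, gives
`2d ≤ ∑ w j ‖x j - x l‖` for the degree `d = ∑ θ i l`. Cauchy–Schwarz over `j ≠ l` then yields
`4d² ≤ (M - w l) 2M < 2M²`, because `w l > 0` as soon as a segment arrives at `x l`.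
-/

open Finset

lemma inv_mul_sq_self (t : ℝ) : t⁻¹ * t ^ 2 = t := by
  rw [sq, ← mul_assoc, inv_mul_mul_self]

lemma sum_add_sum_le_sum_sum {ι M : Type*} [Fintype ι] [AddCommMonoid M] [PartialOrder M]
    [IsOrderedAddMonoid M] {F : ι → ι → M} (hF : ∀ i j, 0 ≤ F i j) {l : ι} (hl : F l l = 0) :
    ∑ i, F i l + ∑ j, F l j ≤ ∑ i, ∑ j, F i j := by
  classical
  rw [← add_sum_erase univ (fun i => ∑ j, F i j) (mem_univ l),
    ← sum_erase (f := fun i => F i l) univ hl, add_comm]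
  gcongr with i
  exact single_le_sum (fun j _ => hF i j) (mem_univ l)

lemma sq_sum_mul_le_sum_sub_mul_sum {ι : Type*} [Fintype ι] {w ρ : ι → ℝ} (hw : ∀ j, 0 ≤ w j)
    {l : ι} (hρ : ρ l = 0) :
    (∑ j, w j * ρ j) ^ 2 ≤ (∑ j, w j - w l) * ∑ j, w j * ρ j ^ 2 := by
  classical
  have := sum_sq_le_sum_mul_sum_of_sq_le_mul (univ.erase l) (r := fun j => w j * ρ j) (f := w)
    (g := fun j => w j * ρ j ^ 2) (fun j _ => hw j) (fun j _ => mul_nonneg (hw j) (sq_nonneg _))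
    (fun j _ => le_of_eq (by ring))
  rwa [sum_erase univ (f := fun j => w j * ρ j) (by simp [hρ]),
    sum_erase univ (f := fun j => w j * ρ j ^ 2) (by simp [hρ]), sum_erase_eq_sub (mem_univ l)]
    at this

noncomputable section

variable {E : Type*} [NormedAddCommGroup E] [InnerProductSpace ℝ E]

lemma two_mul_inner_sub_left_self (a b : E) :
    2 * ⟪a - b, a⟫ = ‖a - b‖ ^ 2 + ‖a‖ ^ 2 - ‖b‖ ^ 2 := by
  rw [norm_sub_sq_real, inner_sub_left, real_inner_self_eq_norm_sq, real_inner_comm]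
  ring

lemma inner_inv_norm_smul_sub_inv_norm_smul_nonneg (x y : E) :
    0 ≤ ⟪‖x‖⁻¹ • x - ‖y‖⁻¹ • y, x - y⟫ := by
  rcases eq_or_ne x 0 with rfl | hx
  · simp [real_inner_smul_left, inv_mul_sq_self]
  rcases eq_or_ne y 0 with rfl | hy
  · simp [real_inner_smul_left, inv_mul_sq_self]
  have hx' := norm_pos_iff.2 hx
  have hy' := norm_pos_iff.2 hy
  have key : ⟪‖x‖⁻¹ • x - ‖y‖⁻¹ • y, x - y⟫ = (‖x‖⁻¹ + ‖y‖⁻¹) * (‖x‖ * ‖y‖ - ⟪x, y⟫) := by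
    simp only [inner_sub_left, inner_sub_right, real_inner_smul_left, real_inner_self_eq_norm_sq,
      real_inner_comm y x]
    field_simp
    ring
  rw [key]
  exact mul_nonneg (by positivity) (sub_nonneg.2 (real_inner_le_norm x y))

namespace SegmentNetwork

variable {ι : Type*} [Fintype ι] (x : ι → E) (θ : ι → ι → ℝ)

def force (j : ι) : E := ∑ i, θ i j • (‖x i - x j‖⁻¹ • (x i - x j))

def mass : ℝ := (1 / 2) * ∑ i, ∑ j, θ i j * ‖x i - x j‖

/-- The derivative of the mass along the flow of a vector field with values `X` at the junctions. -/
def firstVariation (X : ι → E) : ℝ :=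
  (1 / 2) * ∑ i, ∑ j, θ i j * (‖x i - x j‖⁻¹ * ⟪X i - X j, x i - x j⟫)

lemma firstVariation_self : firstVariation x θ x = mass x θ := by
  simp only [firstVariation, mass, real_inner_self_eq_norm_sq, inv_mul_sq_self]

lemma sum_inner_force (hθ : ∀ i j, θ i j = θ j i) (X : ι → E) :
    ∑ j, ⟪X j, force x θ j⟫ = -firstVariation x θ X := by
  have h₁ : ∑ j, ⟪X j, force x θ j⟫ = ∑ i, ∑ j, θ i j * (‖x i - x j‖⁻¹ * ⟪X j, x i - x j⟫) := by
    rw [sum_comm]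
    simp only [force, inner_sum, real_inner_smul_right]
  have h₂ : ∑ j, ⟪X j, force x θ j⟫ = -∑ i, ∑ j, θ i j * (‖x i - x j‖⁻¹ * ⟪X i, x i - x j⟫) := by
    simp only [force, inner_sum, real_inner_smul_right, ← sum_neg_distrib]
    refine sum_congr rfl fun j _ => sum_congr rfl fun i _ => ?_
    rw [hθ, norm_sub_rev, ← neg_sub (x j), inner_neg_right]
    ring
  have h₃ : ∑ i, ∑ j, θ i j * (‖x i - x j‖⁻¹ * ⟪X j, x i - x j⟫)
        - ∑ i, ∑ j, θ i j * (‖x i - x j‖⁻¹ * ⟪X i, x i - x j⟫)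
        = -∑ i, ∑ j, θ i j * (‖x i - x j‖⁻¹ * ⟪X i - X j, x i - x j⟫) := by
    rw [← sum_sub_distrib, ← sum_neg_distrib]
    refine sum_congr rfl fun i _ => ?_
    rw [← sum_sub_distrib, ← sum_neg_distrib]
    refine sum_congr rfl fun j _ => ?_
    rw [inner_sub_left]
    ring
  rw [firstVariation]
  linarith

lemma sum_force_eq_zero (hθ : ∀ i j, θ i j = θ j i) : ∑ j, force x θ j = 0 := by
  have h := sum_inner_force x θ hθ fun _ => ∑ j, force x θ j
  simp only [firstVariation, sub_self, inner_zero_left, mul_zero, sum_const_zero, neg_zero] at h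
  rwa [← inner_sum, inner_self_eq_zero] at h

/-- A free boundary geodesic network in the closed unit ball. -/
structure IsFreeBoundaryGeodesic : Prop where
  norm_le_one : ∀ i, ‖x i‖ ≤ 1
  force_eq_zero : ∀ j, ‖x j‖ < 1 → force x θ j = 0
  exists_force_eq_smul : ∀ j, ‖x j‖ = 1 → ∃ c : ℝ, force x θ j = c • x j

/-- On a free boundary geodesic network `force x θ j = -reaction x θ j • x j`
(`IsFreeBoundaryGeodesic.force_eq_neg_reaction_smul`). -/
def reaction (j : ι) : ℝ := -⟪x j, force x θ j⟫

lemma sum_reaction (hθ : ∀ i j, θ i j = θ j i) : ∑ j, reaction x θ j = mass x θ := by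
  simp only [reaction, sum_neg_distrib, sum_inner_force x θ hθ, firstVariation_self, neg_neg]

lemma sum_le_firstVariation_radial (hx : Function.Injective x) (hθ : ∀ i j, θ i j = θ j i)
    (hθ₀ : ∀ i j, 0 ≤ θ i j) {l : ι} (hθl : θ l l = 0) :
    ∑ i, θ i l ≤ firstVariation x θ fun j => ‖x j - x l‖⁻¹ • (x j - x l) := by
  set V : ι → E := fun j => ‖x j - x l‖⁻¹ • (x j - x l)
  -- `V` is monotone, so every segment contributes `F i j ≥ 0`; those ending at `x l` contribute
  -- exactly their multiplicity.
  set F : ι → ι → ℝ := fun i j => θ i j * (‖x i - x j‖⁻¹ * ⟪V i - V j, x i - x j⟫)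
  have hF₀ : ∀ i j, 0 ≤ F i j := fun i j =>
    mul_nonneg (hθ₀ i j) <| mul_nonneg (inv_nonneg.2 (norm_nonneg _)) <| by
      simpa only [sub_sub_sub_cancel_right] using
        inner_inv_norm_smul_sub_inv_norm_smul_nonneg (x i - x l) (x j - x l)
  have hF_comm : ∀ i j, F i j = F j i := by
    intro i j
    simp only [F]
    rw [hθ, norm_sub_rev, ← neg_sub (V j), ← neg_sub (x j), inner_neg_neg]
  have hF_left : ∀ i, F i l = θ i l := by
    intro i
    rcases eq_or_ne i l with rfl | hil
    · simp [F, hθl]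
    · have : x i - x l ≠ 0 := sub_ne_zero.2 (hx.ne hil)
      simp only [F, V, sub_self, norm_zero, inv_zero, zero_smul, sub_zero, real_inner_smul_left,
        real_inner_self_eq_norm_sq]
      field_simp
  have hF_right : ∑ j, F l j = ∑ j, θ j l :=
    sum_congr rfl fun j _ => (hF_comm l j).trans (hF_left j)
  have hsum := sum_add_sum_le_sum_sum hF₀ (l := l) (by rw [hF_left, hθl])
  rw [hF_right, sum_congr rfl fun i _ => hF_left i] at hsum
  change ∑ i, θ i l ≤ (1 / 2) * ∑ i, ∑ j, F i j
  linarith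

namespace IsFreeBoundaryGeodesic

variable {x θ} (h : IsFreeBoundaryGeodesic x θ)
include h

lemma reaction_eq_zero {j : ι} (hj : ‖x j‖ ≠ 1) : reaction x θ j = 0 := by
  simp [reaction, h.force_eq_zero j ((h.norm_le_one j).lt_of_ne hj)]

lemma force_eq_neg_reaction_smul (j : ι) : force x θ j = -reaction x θ j • x j := by
  by_cases hj : ‖x j‖ = 1
  · obtain ⟨c, hc⟩ := h.exists_force_eq_smul j hj
    simp [reaction, hc, real_inner_smul_right, hj]
  · rw [h.reaction_eq_zero hj, h.force_eq_zero j ((h.norm_le_one j).lt_of_ne hj), neg_zero,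
      zero_smul]

lemma sum_reaction_smul (hθ : ∀ i j, θ i j = θ j i) : ∑ j, reaction x θ j • x j = 0 := by
  simpa [h.force_eq_neg_reaction_smul] using sum_force_eq_zero x θ hθ

lemma sum_le_two_mul_reaction (hθ₀ : ∀ i j, 0 ≤ θ i j) {j : ι} (hj : ‖x j‖ = 1) :
    ∑ i, θ i j * ‖x i - x j‖ ≤ 2 * reaction x θ j := by
  rw [reaction, force, inner_sum, ← sum_neg_distrib, mul_sum]
  refine sum_le_sum fun i _ => ?_
  have hi : ‖x j - x i‖ ^ 2 ≤ 2 * ⟪x j - x i, x j⟫ := by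
    rw [two_mul_inner_sub_left_self, hj]
    nlinarith [h.norm_le_one i, norm_nonneg (x i)]
  rw [real_inner_smul_right, real_inner_smul_right, ← neg_sub (x j), inner_neg_right,
    real_inner_comm, norm_neg]
  calc θ i j * ‖x j - x i‖ = θ i j * (‖x j - x i‖⁻¹ * ‖x j - x i‖ ^ 2) := by
        rw [inv_mul_sq_self]
    _ ≤ θ i j * (‖x j - x i‖⁻¹ * (2 * ⟪x j - x i, x j⟫)) := by
        have := hθ₀ i j
        gcongr
    _ = 2 * -(θ i j * (‖x j - x i‖⁻¹ * -⟪x j - x i, x j⟫)) := by ring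

lemma reaction_nonneg (hθ₀ : ∀ i j, 0 ≤ θ i j) (j : ι) : 0 ≤ reaction x θ j := by
  by_cases hj : ‖x j‖ = 1
  · have := h.sum_le_two_mul_reaction hθ₀ hj
    have : 0 ≤ ∑ i, θ i j * ‖x i - x j‖ :=
      sum_nonneg fun i _ => mul_nonneg (hθ₀ i j) (norm_nonneg _)
    linarith
  · rw [h.reaction_eq_zero hj]

lemma sum_reaction_mul_norm_sub_sq (hθ : ∀ i j, θ i j = θ j i) {l : ι} (hl : ‖x l‖ = 1) :
    ∑ j, reaction x θ j * ‖x j - x l‖ ^ 2 = 2 * mass x θ := by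
  have hterm : ∀ j, reaction x θ j * ‖x j - x l‖ ^ 2
      = 2 * reaction x θ j - 2 * ⟪x l, reaction x θ j • x j⟫ := by
    intro j
    by_cases hj : ‖x j‖ = 1
    · rw [norm_sub_sq_real, hj, hl, real_inner_smul_right, real_inner_comm]
      ring
    · simp [h.reaction_eq_zero hj]
  simp only [hterm, sum_sub_distrib, ← mul_sum, ← inner_sum, h.sum_reaction_smul hθ,
    sum_reaction x θ hθ, inner_zero_right, mul_zero, sub_zero]

lemma two_mul_firstVariation_radial (hθ : ∀ i j, θ i j = θ j i) {l : ι} (hl : ‖x l‖ = 1) :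
    2 * firstVariation x θ (fun j => ‖x j - x l‖⁻¹ • (x j - x l))
      = ∑ j, reaction x θ j * ‖x j - x l‖ := by
  rw [← neg_neg (firstVariation x θ _), ← sum_inner_force x θ hθ, mul_neg, mul_sum,
    ← sum_neg_distrib]
  refine sum_congr rfl fun j _ => ?_
  rw [h.force_eq_neg_reaction_smul, real_inner_smul_right]
  by_cases hj : ‖x j‖ = 1
  · have hV : 2 * ⟪‖x j - x l‖⁻¹ • (x j - x l), x j⟫ = ‖x j - x l‖ := by
      rw [real_inner_smul_left, mul_left_comm, two_mul_inner_sub_left_self, hj, hl,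
        add_sub_cancel_right, inv_mul_sq_self]
    linear_combination reaction x θ j * hV
  · simp [h.reaction_eq_zero hj]

lemma reaction_pos (hx : Function.Injective x) (hθ₀ : ∀ i j, 0 ≤ θ i j) {l : ι}
    (hθl : θ l l = 0) (hl : ‖x l‖ = 1) (hpos : 0 < ∑ i, θ i l) : 0 < reaction x θ l := by
  obtain ⟨i, -, hi⟩ := exists_lt_of_sum_lt (by simpa using hpos : ∑ _i : ι, (0 : ℝ) < ∑ i, θ i l)
  have hil : i ≠ l := by
    rintro rfl
    exact hi.ne' hθl
  have : 0 < ∑ i, θ i l * ‖x i - x l‖ :=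
    sum_pos' (fun j _ => mul_nonneg (hθ₀ j l) (norm_nonneg _))
      ⟨i, mem_univ i, mul_pos hi (norm_pos_iff.2 (sub_ne_zero.2 (hx.ne hil)))⟩
  linarith [h.sum_le_two_mul_reaction hθ₀ hl]

theorem sum_lt_mass_div_sqrt_two (hx : Function.Injective x) (hθ : ∀ i j, θ i j = θ j i)
    (hθ₀ : ∀ i j, 0 ≤ θ i j) {l : ι} (hθl : θ l l = 0) (hl : ‖x l‖ = 1)
    (hpos : 0 < ∑ i, θ i l) :
    ∑ i, θ i l < mass x θ / √2 := by
  have hw := h.reaction_nonneg hθ₀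
  have hwl := h.reaction_pos hx hθ₀ hθl hl hpos
  have hwM : reaction x θ l ≤ mass x θ :=
    sum_reaction x θ hθ ▸ single_le_sum (fun j _ => hw j) (mem_univ l)
  have hdeg : 2 * ∑ i, θ i l ≤ ∑ j, reaction x θ j * ‖x j - x l‖ := by
    rw [← h.two_mul_firstVariation_radial hθ hl]
    linarith [sum_le_firstVariation_radial x θ hx hθ hθ₀ hθl]
  have hCS := sq_sum_mul_le_sum_sub_mul_sum hw (ρ := fun j => ‖x j - x l‖) (l := l) (by simp)
  rw [sum_reaction x θ hθ, h.sum_reaction_mul_norm_sub_sq hθ hl] at hCS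
  rw [lt_div_iff₀ (by positivity), ← pow_lt_pow_iff_left₀ (by positivity) (by linarith) two_ne_zero,
    mul_pow, Real.sq_sqrt zero_le_two]
  nlinarith

end IsFreeBoundaryGeodesic

end SegmentNetwork

end

theorem density_bound_boundary_junction_general
    (N : ℕ) (J : Fin N → EuclideanSpace ℝ (Fin 2))
    (hJ : Function.Injective J)
    (θ : Fin N → Fin N → ℕ)
    (hθsymm : ∀ i j, θ i j = θ j i)
    (hθdiag : ∀ i, θ i i = 0)
    (hball : ∀ i, ‖J i‖ ≤ 1)
    (hint : ∀ j, ‖J j‖ < 1 →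
      ∑ i, (θ i j : ℝ) • ((‖J i - J j‖)⁻¹ • (J i - J j)) = 0)
    (hbdry : ∀ l, ‖J l‖ = 1 → ∃ c : ℝ,
      ∑ i, (θ i l : ℝ) • ((‖J i - J l‖)⁻¹ • (J i - J l)) = c • J l)
    (μ : ℝ)
    (hmass : (1/2) * ∑ i, ∑ j, (θ i j : ℝ) * ‖J i - J j‖ ≤ μ) :
    ∀ l, ‖J l‖ = 1 → 0 < ∑ i, θ i l →
      (∑ i, (θ i l : ℝ)) < μ / Real.sqrt 2 := by
  intro l hl hdeg
  have hnet : SegmentNetwork.IsFreeBoundaryGeodesic J fun i j => (θ i j : ℝ) :=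
    ⟨hball, hint, hbdry⟩
  calc ∑ i, (θ i l : ℝ) < SegmentNetwork.mass J (fun i j => (θ i j : ℝ)) / √2 :=
        hnet.sum_lt_mass_div_sqrt_two hJ (fun i j => by rw [hθsymm]) (fun _ _ => Nat.cast_nonneg _)
          (by simp [hθdiag]) hl (by exact_mod_cast hdeg)
    _ ≤ μ / √2 := div_le_div_of_nonneg_right hmass (Real.sqrt_nonneg 2)

/-- Upper bound for the density at boundary junctions of a free boundary geodesic
network of mass at most `μ` in the closed unit disk. -/
theorem density_bound_boundary_junction
    (N : ℕ) (J : Fin N → EuclideanSpace ℝ (Fin 2))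
    (hJ : Function.Injective J)
    (θ : Fin N → Fin N → ℕ)
    (hθsymm : ∀ i j, θ i j = θ j i)
    (hθdiag : ∀ i, θ i i = 0)
    (hball : ∀ i, ‖J i‖ ≤ 1)
    (hint : ∀ j, ‖J j‖ < 1 →
      ∑ i, (θ i j : ℝ) • ((‖J i - J j‖)⁻¹ • (J i - J j)) = 0)
    (hbdry : ∀ l, ‖J l‖ = 1 → ∃ c : ℝ,
      ∑ i, (θ i l : ℝ) • ((‖J i - J l‖)⁻¹ • (J i - J l)) = c • J l)
    (μ : ℝ) (hμ : 0 < μ)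
    (hmass : (1/2) * ∑ i, ∑ j, (θ i j : ℝ) * ‖J i - J j‖ ≤ μ) :
    ∀ l, ‖J l‖ = 1 → 0 < ∑ i, θ i l →
      (∑ i, (θ i l : ℝ)) < μ / Real.sqrt 2 :=
  density_bound_boundary_junction_general N J hJ θ hθsymm hθdiag hball hint hbdry μ hmass
end

section
/- Let a > 1 be a real number. Then H¹({p ∈ B̄₁ : p₂ = a·p₁² − 1}) = ( log(√(8a − 3) + 2·√(2a − 1)) + 2·√(2a − 1)·√(8a − 3) ) / (2a), where log denotes the natural logarithm. -/
/-!
With `γ x = (x, a x² - 1)` and `c = √(2a - 1) / a`, the set is `γ '' [-c, c]`, and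
`σ x = (2ax √(1 + 4a²x²) + arsinh (2ax)) / (4a)` is a primitive of the speed `‖γ'‖`.
By the mean value inequality every chord is at most the corresponding increment of `σ`,
so `γ ∘ σ⁻¹` is 1-Lipschitz and `μH[1] (γ '' [-c, c]) ≤ σ c - σ (-c)`.
Conversely a chord of a parabola is parallel to the tangent at the midpoint of its
parameter interval, so it falls short of the increment of `σ` only by `O((y - x)²)`.
Since the Hausdorff measure of a connected set dominates its diameter and is additive along
the injective curve, `y ↦ μH[1] (γ '' [-c, y]) - σ y` then has increments bounded below by
`-a (y - x)²`; such a function is monotone (partition and let the mesh go to zero),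
which gives the reverse inequality.
-/

open MeasureTheory Set Filter Topology Real

theorem le_of_forall_sub_le_mul_sq {g : ℝ → ℝ} {C x y : ℝ} (hxy : x ≤ y)
    (h : ∀ u v, x ≤ u → u ≤ v → v ≤ y → g u - g v ≤ C * (v - u) ^ 2) : g x ≤ g y := by
  have key : ∀ n : ℕ, g x - g y ≤ C * (y - x) ^ 2 / (n + 1) := by
    intro n
    set δ := (y - x) / (n + 1)
    have hδ : 0 ≤ δ := div_nonneg (sub_nonneg.2 hxy) (by positivity)
    set p : ℕ → ℝ := fun i => x + i * δ
    have hp_le : ∀ i ≤ n + 1, p i ≤ y := fun i hi => by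
      have : (i : ℝ) * δ ≤ (n + 1) * δ := by gcongr; exact_mod_cast hi
      simp only [p, δ] at this ⊢
      rw [mul_div_cancel₀ _ (by positivity)] at this
      linarith
    calc g x - g y = ∑ i ∈ Finset.range (n + 1), (g (p i) - g (p (i + 1))) := by
          rw [Finset.sum_range_sub']
          simp only [p, δ]
          push_cast
          rw [mul_div_cancel₀ _ (by positivity)]
          simp
      _ ≤ ∑ i ∈ Finset.range (n + 1), C * δ ^ 2 := by
          refine Finset.sum_le_sum fun i hi => ?_
          have hstep : p (i + 1) - p i = δ := by simp only [p]; push_cast; ring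
          rw [← hstep]
          exact h _ _ (le_add_of_nonneg_right (by positivity)) (by linarith)
            (hp_le _ (Finset.mem_range.1 hi))
      _ = C * (y - x) ^ 2 / (n + 1) := by
          simp only [Finset.sum_const, Finset.card_range, nsmul_eq_mul, δ]
          push_cast
          field_simp
  have hlim : Tendsto (fun n : ℕ => C * (y - x) ^ 2 / ((n : ℝ) + 1)) atTop (𝓝 0) := by
    simpa [div_eq_mul_inv] using
      tendsto_one_div_add_atTop_nhds_zero_nat.const_mul (C * (y - x) ^ 2)
  linarith [ge_of_tendsto' hlim key]

theorem norm_sub_le_sub_of_norm_deriv_le {E : Type*} [NormedAddCommGroup E] [NormedSpace ℝ E]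
    {f f' : ℝ → E} {B B' : ℝ → ℝ} {x y : ℝ} (hxy : x ≤ y)
    (hf : ∀ t, HasDerivAt f (f' t) t) (hB : ∀ t, HasDerivAt B (B' t) t)
    (bound : ∀ t ∈ Ico x y, ‖f' t‖ ≤ B' t) : ‖f y - f x‖ ≤ B y - B x := by
  simpa using image_norm_le_of_norm_deriv_right_le_deriv_boundary
    (f := fun t => f t - f x) (B := fun t => B t - B x)
    (fun t _ => ((hf t).sub_const (f x)).continuousAt.continuousWithinAt)
    (fun t _ => ((hf t).sub_const (f x)).hasDerivWithinAt) (by simp)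
    (fun t => (hB t).sub_const (B x)) bound (right_mem_Icc.2 hxy)

theorem EuclideanSpace.norm_vecTwo (x y : ℝ) : ‖!₂[x, y]‖ = √(x ^ 2 + y ^ 2) := by
  simp [EuclideanSpace.norm_eq, Fin.sum_univ_two]

theorem hasDerivAt_mul_sqrt_one_add_sq_add_arsinh (u : ℝ) :
    HasDerivAt (fun u => u * √(1 + u ^ 2) + arsinh u) (2 * √(1 + u ^ 2)) u := by
  have hpos : 0 < 1 + u ^ 2 := by positivity
  have hsqrt : HasDerivAt (fun u => √(1 + u ^ 2)) (u / √(1 + u ^ 2)) u := by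
    refine (((hasDerivAt_pow 2 u).const_add 1).sqrt hpos.ne').congr_deriv ?_
    field_simp
    ring
  refine (((hasDerivAt_id' u).mul hsqrt).add (hasDerivAt_arsinh u)).congr_deriv ?_
  have hs : √(1 + u ^ 2) ^ 2 = 1 + u ^ 2 := sq_sqrt hpos.le
  field_simp
  linear_combination -hs

section HausdorffMeasure

variable {X : Type*} [MetricSpace X] [MeasurableSpace X] [BorelSpace X]

theorem hausdorffMeasure_image_le_of_dist_le {α Y : Type*} [MetricSpace Y] [MeasurableSpace Y]
    [BorelSpace Y] {f : α → X} {g : α → Y} {s : Set α}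
    (h : ∀ x ∈ s, ∀ y ∈ s, dist (f x) (f y) ≤ dist (g x) (g y)) {d : ℝ} (hd : 0 ≤ d) :
    μH[d] (f '' s) ≤ μH[d] (g '' s) := by
  rcases s.eq_empty_or_nonempty with rfl | ⟨x₀, -⟩
  · simp
  have : Nonempty α := ⟨x₀⟩
  set F := f ∘ Function.invFunOn g s
  have hF : EqOn (F ∘ g) f s := fun x hx => by
    have hmem : Function.invFunOn g s (g x) ∈ s := Function.invFunOn_mem ⟨x, hx, rfl⟩
    refine dist_le_zero.1 ((h _ hmem x hx).trans ?_)
    rw [Function.invFunOn_eq (f := g) ⟨x, hx, rfl⟩, dist_self]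
  have hlip : LipschitzOnWith 1 F (g '' s) := by
    refine LipschitzOnWith.of_dist_le_mul ?_
    simp only [forall_mem_image, NNReal.coe_one, one_mul]
    intro x hx y hy
    rw [← Function.comp_apply (f := F), ← Function.comp_apply (f := F) (g := g) (x := y),
      hF hx, hF hy]
    exact h x hx y hy
  calc μH[d] (f '' s) = μH[d] (F '' (g '' s)) := by
        rw [image_image]
        exact congrArg _ (image_congr hF).symm
    _ ≤ 1 ^ d * μH[d] (g '' s) := hlip.hausdorffMeasure_image_le hd
    _ = μH[d] (g '' s) := by simp

theorem ofReal_dist_le_hausdorffMeasure {T : Set X} (hT : IsPreconnected T) {x y : X}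
    (hx : x ∈ T) (hy : y ∈ T) : ENNReal.ofReal (dist x y) ≤ μH[1] T := by
  have hsub : Icc 0 (dist x y) ⊆ dist x '' T :=
    (hT.image _ (continuous_const.dist continuous_id).continuousOn).Icc_subset
      ⟨x, hx, dist_self x⟩ ⟨y, hy, rfl⟩
  calc ENNReal.ofReal (dist x y) = μH[1] (Icc 0 (dist x y)) := by
        rw [hausdorffMeasure_real, Real.volume_Icc, sub_zero]
    _ ≤ μH[1] (dist x '' T) := measure_mono hsub
    _ ≤ 1 ^ (1 : ℝ) * μH[1] T :=
        (LipschitzWith.dist_right x).hausdorffMeasure_image_le zero_le_one T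
    _ = μH[1] T := by simp

theorem measure_image_Icc_eq_add {Z : Type*} [TopologicalSpace Z] [T2Space Z] [MeasurableSpace Z]
    [OpensMeasurableSpace Z] (μ : Measure Z) [NullSingletonClass μ] {γ : ℝ → Z} {s u t : ℝ}
    (hγ : ContinuousOn γ (Icc s t)) (hinj : InjOn γ (Icc s t)) (hsu : s ≤ u) (hut : u ≤ t) :
    μ (γ '' Icc s t) = μ (γ '' Icc s u) + μ (γ '' Icc u t) := by
  have hleft : Icc s u ⊆ Icc s t := Icc_subset_Icc_right hut
  have hright : Icc u t ⊆ Icc s t := Icc_subset_Icc_left hsu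
  rw [← Icc_union_Icc_eq_Icc hsu hut, image_union]
  refine measure_union₀' ?_ ?_
  · exact (isCompact_Icc.image_of_continuousOn (hγ.mono hleft)).isClosed.measurableSet
      |>.nullMeasurableSet
  · refine measure_mono_null ?_ (measure_singleton (γ u))
    rw [← hinj.image_inter hleft hright, Icc_inter_Icc_eq_singleton hsu hut, image_singleton]

theorem hausdorffMeasure_image_Icc_le_ofReal {γ : ℝ → X} {σ : ℝ → ℝ} {s t : ℝ}
    (hchord : ∀ x y, s ≤ x → x ≤ y → y ≤ t → dist (γ x) (γ y) ≤ σ y - σ x) :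
    μH[1] (γ '' Icc s t) ≤ ENNReal.ofReal (σ t - σ s) := by
  have hdist : ∀ x ∈ Icc s t, ∀ y ∈ Icc s t, dist (γ x) (γ y) ≤ dist (σ x) (σ y) := by
    intro x hx y hy
    rcases le_total x y with hxy | hyx
    · rw [Real.dist_eq, abs_sub_comm]
      exact (hchord x y hx.1 hxy hy.2).trans (le_abs_self _)
    · rw [dist_comm, Real.dist_eq]
      exact (hchord y x hy.1 hyx hx.2).trans (le_abs_self _)
  have hmaps : σ '' Icc s t ⊆ Icc (σ s) (σ t) := by
    rintro _ ⟨x, hx, rfl⟩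
    exact ⟨sub_nonneg.1 (dist_nonneg.trans (hchord s x le_rfl hx.1 hx.2)),
      sub_nonneg.1 (dist_nonneg.trans (hchord x t hx.1 hx.2 le_rfl))⟩
  calc μH[1] (γ '' Icc s t) ≤ μH[1] (σ '' Icc s t) :=
        hausdorffMeasure_image_le_of_dist_le hdist zero_le_one
    _ ≤ μH[1] (Icc (σ s) (σ t)) := measure_mono hmaps
    _ = ENNReal.ofReal (σ t - σ s) := by rw [hausdorffMeasure_real, Real.volume_Icc]

theorem ofReal_le_hausdorffMeasure_image_Icc {γ : ℝ → X} {σ : ℝ → ℝ} {s t C : ℝ} (hst : s ≤ t)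
    (hγ : ContinuousOn γ (Icc s t)) (hinj : InjOn γ (Icc s t))
    (hchord : ∀ x y, s ≤ x → x ≤ y → y ≤ t → dist (γ x) (γ y) ≤ σ y - σ x)
    (harc : ∀ x y, s ≤ x → x ≤ y → y ≤ t → σ y - σ x ≤ dist (γ x) (γ y) + C * (y - x) ^ 2) :
    ENNReal.ofReal (σ t - σ s) ≤ μH[1] (γ '' Icc s t) := by
  have hfin : ∀ x y, s ≤ x → x ≤ y → y ≤ t → μH[1] (γ '' Icc x y) ≠ ⊤ := fun x y hx hxy hy =>
    ne_top_of_le_ne_top ENNReal.ofReal_ne_top <| hausdorffMeasure_image_Icc_le_ofReal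
      fun u v hu huv hv => hchord u v (hx.trans hu) huv (hv.trans hy)
  set L : ℝ → ℝ := fun y => (μH[1] (γ '' Icc s y)).toReal
  have hL : ∀ x y, s ≤ x → x ≤ y → y ≤ t → dist (γ x) (γ y) ≤ L y - L x := by
    intro x y hx hxy hy
    have := Measure.nullSingletonClass_hausdorff (X := X) one_pos
    have hsub : Icc s y ⊆ Icc s t := Icc_subset_Icc_right hy
    have hxy_sub : Icc x y ⊆ Icc s t := Icc_subset_Icc hx hy
    have hsplit := measure_image_Icc_eq_add μH[1] (hγ.mono hsub) (hinj.mono hsub) hx hxy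
    have hdist := ofReal_dist_le_hausdorffMeasure
      (isPreconnected_Icc.image _ (hγ.mono hxy_sub)) (mem_image_of_mem γ (left_mem_Icc.2 hxy))
      (mem_image_of_mem γ (right_mem_Icc.2 hxy))
    rw [ENNReal.ofReal_le_iff_le_toReal (hfin x y hx hxy hy)] at hdist
    simp only [L, hsplit,
      ENNReal.toReal_add (hfin s x le_rfl hx (hxy.trans hy)) (hfin x y hx hxy hy)]
    linarith
  have hLσ := le_of_forall_sub_le_mul_sq (g := fun y => L y - σ y) (C := C) hst
    fun u v hu huv hv => by linarith [hL u v hu huv hv, harc u v hu huv hv]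
  rw [ENNReal.ofReal_le_iff_le_toReal (hfin s t le_rfl hst le_rfl)]
  linarith [ENNReal.toReal_nonneg (a := μH[1] (γ '' Icc s s))]

theorem hausdorffMeasure_image_Icc_eq_ofReal {γ : ℝ → X} {σ : ℝ → ℝ} {s t C : ℝ} (hst : s ≤ t)
    (hγ : ContinuousOn γ (Icc s t)) (hinj : InjOn γ (Icc s t))
    (hchord : ∀ x y, s ≤ x → x ≤ y → y ≤ t → dist (γ x) (γ y) ≤ σ y - σ x)
    (harc : ∀ x y, s ≤ x → x ≤ y → y ≤ t → σ y - σ x ≤ dist (γ x) (γ y) + C * (y - x) ^ 2) :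
    μH[1] (γ '' Icc s t) = ENNReal.ofReal (σ t - σ s) :=
  (hausdorffMeasure_image_Icc_le_ofReal hchord).antisymm
    (ofReal_le_hausdorffMeasure_image_Icc hst hγ hinj hchord harc)

end HausdorffMeasure

noncomputable section Parabola

def parabola (a x : ℝ) : EuclideanSpace ℝ (Fin 2) := !₂[x, a * x ^ 2 - 1]

def parabolaTangent (a x : ℝ) : EuclideanSpace ℝ (Fin 2) := !₂[1, 2 * a * x]

def parabolaArcLength (a x : ℝ) : ℝ :=
  (2 * a * x * √(1 + (2 * a * x) ^ 2) + arsinh (2 * a * x)) / (4 * a)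

variable {a : ℝ}

theorem parabola_injective : Function.Injective (parabola a) := fun x y h => by
  simpa [parabola] using congrArg (· 0) h

theorem hasDerivAt_parabola (x : ℝ) : HasDerivAt (parabola a) (parabolaTangent a x) x := by
  have h : HasDerivAt (fun x : ℝ => ![x, a * x ^ 2 - 1]) ![1, 2 * a * x] x := by
    rw [hasDerivAt_pi]
    intro i
    fin_cases i
    · simpa using hasDerivAt_id' x
    · simpa [mul_comm, mul_left_comm, mul_assoc] using
        ((hasDerivAt_pow 2 x).const_mul a).sub_const 1
  exact (PiLp.continuousLinearEquiv 2 ℝ _).symm.hasFDerivAt.comp_hasDerivAt x h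

theorem continuous_parabola : Continuous (parabola a) :=
  continuous_iff_continuousAt.2 fun x => (hasDerivAt_parabola x).continuousAt

theorem norm_parabolaTangent (x : ℝ) : ‖parabolaTangent a x‖ = √(1 + (2 * a * x) ^ 2) := by
  simp [parabolaTangent, EuclideanSpace.norm_vecTwo]

theorem parabola_sub_parabola (x y : ℝ) :
    parabola a y - parabola a x = (y - x) • parabolaTangent a ((x + y) / 2) := by
  ext i
  fin_cases i <;> simp [parabola, parabolaTangent]
  ring

theorem dist_parabolaTangent (x y : ℝ) :
    dist (parabolaTangent a x) (parabolaTangent a y) = |2 * a * (x - y)| := by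
  rw [dist_eq_norm]
  have : parabolaTangent a x - parabolaTangent a y = !₂[0, 2 * a * (x - y)] := by
    ext i
    fin_cases i <;> simp [parabolaTangent]
    ring
  rw [this, EuclideanSpace.norm_vecTwo]
  simp [sqrt_sq_eq_abs]

theorem hasDerivAt_parabolaArcLength (ha : a ≠ 0) (x : ℝ) :
    HasDerivAt (parabolaArcLength a) ‖parabolaTangent a x‖ x := by
  have h := ((hasDerivAt_mul_sqrt_one_add_sq_add_arsinh (2 * a * x)).comp x
    ((hasDerivAt_id x).const_mul (2 * a))).div_const (4 * a)
  rw [norm_parabolaTangent]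
  refine h.congr_deriv ?_
  field_simp
  ring

theorem dist_parabola_le (ha : a ≠ 0) {x y : ℝ} (hxy : x ≤ y) :
    dist (parabola a x) (parabola a y) ≤ parabolaArcLength a y - parabolaArcLength a x := by
  rw [dist_comm, dist_eq_norm]
  exact norm_sub_le_sub_of_norm_deriv_le hxy hasDerivAt_parabola
    (hasDerivAt_parabolaArcLength ha) fun t _ => le_rfl

theorem parabolaArcLength_sub_le (ha : 0 < a) {x y : ℝ} (hxy : x ≤ y) :
    parabolaArcLength a y - parabolaArcLength a x
      ≤ dist (parabola a x) (parabola a y) + a * (y - x) ^ 2 := by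
  set m := (x + y) / 2 with hm
  have hchord : dist (parabola a x) (parabola a y) = (y - x) * ‖parabolaTangent a m‖ := by
    rw [dist_comm, dist_eq_norm, parabola_sub_parabola, norm_smul,
      Real.norm_of_nonneg (by linarith)]
  have hbound : ∀ t ∈ Icc x y, ‖parabolaTangent a t‖ ≤ ‖parabolaTangent a m‖ + a * (y - x) := by
    intro t ht
    have hdist : |t - m| ≤ (y - x) / 2 := abs_le.2 ⟨by linarith [ht.1, hm], by linarith [ht.2, hm]⟩
    calc ‖parabolaTangent a t‖
        ≤ ‖parabolaTangent a m‖ + dist (parabolaTangent a t) (parabolaTangent a m) :=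
          norm_le_norm_add_norm_sub' ..
      _ ≤ _ := by
          rw [dist_parabolaTangent, abs_mul, abs_of_pos (by positivity : 0 < 2 * a)]
          nlinarith
  have harc := norm_image_sub_le_of_norm_deriv_le_segment'
    (fun t _ => (hasDerivAt_parabolaArcLength ha.ne' t).hasDerivWithinAt)
    (fun t ht => (Real.norm_of_nonneg (norm_nonneg _)).trans_le
      (hbound t (Ico_subset_Icc_self ht))) y (right_mem_Icc.2 hxy)
  rw [Real.norm_eq_abs] at harc
  rw [hchord]
  nlinarith [le_abs_self (parabolaArcLength a y - parabolaArcLength a x)]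

theorem norm_parabola_le_one_iff (ha : 1 ≤ 2 * a) (x : ℝ) :
    ‖parabola a x‖ ≤ 1 ↔ x ∈ Icc (-(√(2 * a - 1) / a)) (√(2 * a - 1) / a) := by
  have ha0 : 0 < a := by linarith
  have hc : 0 ≤ √(2 * a - 1) / a := by positivity
  have hc2 : (√(2 * a - 1) / a) ^ 2 * a ^ 2 = 2 * a - 1 := by
    rw [div_pow, sq_sqrt (by linarith), div_mul_cancel₀ _ (by positivity)]
  have hnorm : ‖parabola a x‖ ≤ 1 ↔ x ^ 2 * (a ^ 2 * x ^ 2 - (2 * a - 1)) ≤ 0 := by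
    rw [parabola, EuclideanSpace.norm_vecTwo, sqrt_le_left zero_le_one, one_pow]
    constructor <;> intro h <;> nlinarith
  rw [hnorm, mem_Icc, ← abs_le, ← sq_le_sq₀ (abs_nonneg x) hc, sq_abs]
  constructor
  · intro h
    rcases (sq_nonneg x).eq_or_lt with hx | hx
    · rw [← hx]; positivity
    · have h1 : a ^ 2 * x ^ 2 ≤ a ^ 2 * (√(2 * a - 1) / a) ^ 2 := by
        have : a ^ 2 * x ^ 2 - (2 * a - 1) ≤ 0 := by
          by_contra! hneg
          linarith [mul_pos hx hneg]
        linarith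
      exact le_of_mul_le_mul_left h1 (by positivity)
  · intro h
    exact mul_nonpos_of_nonneg_of_nonpos (sq_nonneg x) (by nlinarith)

theorem setOf_mem_closedBall_parabola (ha : 1 ≤ 2 * a) :
    {p : EuclideanSpace ℝ (Fin 2) | p ∈ Metric.closedBall 0 1 ∧ p 1 = a * p 0 ^ 2 - 1}
      = parabola a '' Icc (-(√(2 * a - 1) / a)) (√(2 * a - 1) / a) := by
  ext p
  simp only [mem_ofPred_eq, mem_closedBall_zero_iff, mem_image, ← norm_parabola_le_one_iff ha]
  constructor
  · rintro ⟨hp, h1⟩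
    have hpx : parabola a (p 0) = p := by
      ext i
      fin_cases i <;> simp [parabola, h1]
    exact ⟨p 0, hpx ▸ hp, hpx⟩
  · rintro ⟨x, hx, rfl⟩
    exact ⟨hx, by simp [parabola]⟩

theorem parabolaArcLength_neg (x : ℝ) : parabolaArcLength a (-x) = -parabolaArcLength a x := by
  simp only [parabolaArcLength, mul_neg, neg_sq, arsinh_neg]
  ring

theorem two_mul_parabolaArcLength_boundary (ha : 1 ≤ 2 * a) :
    2 * parabolaArcLength a (√(2 * a - 1) / a)
      = (log (√(8 * a - 3) + 2 * √(2 * a - 1)) + 2 * √(2 * a - 1) * √(8 * a - 3)) / (2 * a) := by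
  have ha0 : a ≠ 0 := by linarith
  have hu : 2 * a * (√(2 * a - 1) / a) = 2 * √(2 * a - 1) := by field_simp
  have hsq : 1 + (2 * √(2 * a - 1)) ^ 2 = 8 * a - 3 := by
    rw [mul_pow, sq_sqrt (by linarith)]; ring
  rw [parabolaArcLength, hu, hsq, arsinh, hsq, add_comm (2 * √(2 * a - 1))]
  field_simp
  ring

end Parabola

/-- The length of the portion of the parabola `y = a x² − 1` (with `a > 1`) contained
in the closed unit disk. -/
theorem parabola_length_in_disk
    (a : ℝ) (ha : 1 < a) :
    μH[1] {p : EuclideanSpace ℝ (Fin 2) |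
        p ∈ Metric.closedBall 0 1 ∧ p 1 = a * (p 0) ^ 2 - 1}
      = ENNReal.ofReal
        ((Real.log (Real.sqrt (8 * a - 3) + 2 * Real.sqrt (2 * a - 1))
          + 2 * Real.sqrt (2 * a - 1) * Real.sqrt (8 * a - 3)) / (2 * a)) := by
  have ha₀ : 0 < a := by linarith
  have ha₁ : 1 ≤ 2 * a := by linarith
  have hc : -(√(2 * a - 1) / a) ≤ √(2 * a - 1) / a := neg_le_self (by positivity)
  rw [setOf_mem_closedBall_parabola ha₁,
    hausdorffMeasure_image_Icc_eq_ofReal hc continuous_parabola.continuousOn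
      parabola_injective.injOn (fun x y _ hxy _ => dist_parabola_le ha₀.ne' hxy)
      (fun x y _ hxy _ => parabolaArcLength_sub_le ha₀ hxy),
    parabolaArcLength_neg, sub_neg_eq_add, ← two_mul, two_mul_parabolaArcLength_boundary ha₁]
end
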